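/- With c*(μ) as in the worse-selection problem (c*(μ) = ∫₀^∞ ln(z) G_α(z/μ) g_α(z) dz + ∫₀^∞ ln(z) G_α(μz) g_α(z) dz for μ ≥ 1): inf_{μ≥1} c*(μ) = ψ(α) and sup_{μ≥1} c*(μ) = 2∫₀^∞ ln(z) G_α(z) g_α(z) dz, the inf attained as μ → ∞ and the sup attained at μ = 1. -/

import Mathlib

open MeasureTheory ProbabilityTheory

/-- The digamma function ψ = Γ'/Γ. -/
noncomputable def digamma (x : ℝ) : ℝ := deriv Real.Gamma x / Real.Gamma x

/-- CDF of the Gamma(α,1) distribution. -/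
noncomputable def gammaCDF (α x : ℝ) : ℝ := ∫ t in Set.Iic x, gammaPDFReal α 1 t

/-- c*(μ) = ∫₀^∞ ln(z) G_α(z/μ) g_α(z) dz + ∫₀^∞ ln(z) G_α(μz) g_α(z) dz. -/
noncomputable def cstarW (α μ : ℝ) : ℝ :=
  (∫ z in Set.Ioi (0:ℝ), Real.log z * gammaCDF α (z / μ) * gammaPDFReal α 1 z) +
    ∫ z in Set.Ioi (0:ℝ), Real.log z * gammaCDF α (μ * z) * gammaPDFReal α 1 z

/-!
Let `X, Y` be independent `Gamma(α, 1)` variables, so that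
`c*(μ) = E[log X; Y ≤ X/μ] + E[log X; Y ≤ μX]`. Writing the second term as
`E[log X] - E[log X; Y > μX]` and exchanging `X` and `Y` there gives
`c*(μ) = ψ(α) + E[log X - log Y; X ≥ μY]`, since `E[log X] = Γ'(α)/Γ(α)`. For `μ ≥ 1` the last
integrand is nonnegative on its region, which shrinks as `μ` grows and becomes empty in the limit.
Hence `c*` is nonincreasing on `[1, ∞)` with limit `ψ(α)`.
-/

open Real Set Filter Topology

local notation "ρ" => volume.restrict (Ioi (0 : ℝ))

theorem abs_log_le_rpow_add_rpow_neg {x ε : ℝ} (hx : 0 < x) (hε : 0 < ε) :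
    |log x| ≤ (x ^ ε + x ^ (-ε)) / ε := by
  have hup := log_le_rpow_div hx.le hε
  have hdown := log_le_rpow_div (inv_pos.2 hx).le hε
  rw [log_inv, inv_rpow hx.le, ← rpow_neg hx.le] at hdown
  have hpos := div_pos (rpow_pos_of_pos hx ε) hε
  have hpos' := div_pos (rpow_pos_of_pos hx (-ε)) hε
  rw [abs_le, add_div]
  constructor <;> linarith

theorem AntitoneOn.csInf_image_Ici_eq_of_tendsto {α β : Type*} [LinearOrder α]
    [ConditionallyCompleteLinearOrder β] [TopologicalSpace β] [OrderClosedTopology β]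
    {f : α → β} {a : α} {L : β} (hf : AntitoneOn f (Ici a)) (hL : Tendsto f atTop (𝓝 L)) :
    sInf (f '' Ici a) = L := by
  have : Nonempty α := ⟨a⟩
  refine IsGLB.csInf_eq ⟨?_, fun b hb => ?_⟩ (nonempty_Ici.image f)
  · rintro _ ⟨x, hx, rfl⟩
    refine le_of_tendsto hL ?_
    filter_upwards [eventually_ge_atTop x] with y hy
    exact hf hx (le_trans hx hy) hy
  · refine ge_of_tendsto hL ?_
    filter_upwards [eventually_ge_atTop a] with y hy
    exact hb (mem_image_of_mem f hy)

theorem integral_mul_setIntegral_eq_setIntegral_prod {X Y : Type*} [MeasurableSpace X]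
    [MeasurableSpace Y] {μ : Measure X} {ν : Measure Y} [SFinite μ] [SFinite ν]
    {f : X → ℝ} {g : Y → ℝ} (hf : Integrable f μ) (hg : Integrable g ν)
    {s : Set (X × Y)} (hs : MeasurableSet s) :
    ∫ x, f x * ∫ y in Prod.mk x ⁻¹' s, g y ∂ν ∂μ = ∫ p in s, f p.1 * g p.2 ∂μ.prod ν := by
  rw [← integral_indicator hs, integral_prod _ ((hf.mul_prod hg).indicator hs)]
  refine integral_congr_ae (ae_of_all _ fun x => ?_)
  dsimp only
  rw [← integral_const_mul, ← integral_indicator (measurable_prodMk_left hs)]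
  congr 1 with y

section GammaDensity

variable {a r α : ℝ}

theorem gammaPDFReal_of_neg {x : ℝ} (hx : x < 0) : gammaPDFReal a r x = 0 :=
  if_neg hx.not_ge

theorem integrable_gammaPDFReal (ha : 0 < a) (hr : 0 < r) : Integrable (gammaPDFReal a r) := by
  refine ⟨(measurable_gammaPDFReal a r).aestronglyMeasurable, ?_⟩
  rw [hasFiniteIntegral_iff_ofReal (ae_of_all _ (gammaPDFReal_nonneg ha hr))]
  exact (lintegral_gammaPDF_eq_one ha hr).trans_lt ENNReal.one_lt_top

theorem integral_gammaPDFReal (ha : 0 < a) (hr : 0 < r) : ∫ x, gammaPDFReal a r x = 1 := by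
  rw [integral_eq_lintegral_of_nonneg_ae (ae_of_all _ (gammaPDFReal_nonneg ha hr))
    (measurable_gammaPDFReal a r).aestronglyMeasurable]
  exact (congrArg ENNReal.toReal (lintegral_gammaPDF_eq_one ha hr)).trans ENNReal.toReal_one

theorem setIntegral_Ioi_gammaPDFReal (ha : 0 < a) (hr : 0 < r) :
    ∫ x in Ioi 0, gammaPDFReal a r x = 1 := by
  rw [← integral_Ici_eq_integral_Ioi, setIntegral_eq_integral_of_forall_compl_eq_zero
    (fun x (hx : x ∉ Ici 0) => gammaPDFReal_of_neg (not_le.1 hx)), integral_gammaPDFReal ha hr]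

theorem gammaCDF_eq_setIntegral_Ioi (c : ℝ) :
    gammaCDF α c = ∫ t in Iic c, gammaPDFReal α 1 t ∂ρ := by
  rw [Measure.restrict_restrict measurableSet_Iic, gammaCDF]
  refine setIntegral_eq_of_subset_of_ae_sdiff_eq_zero measurableSet_Iic.nullMeasurableSet
    inter_subset_left ?_
  filter_upwards [Measure.ae_ne volume 0] with t ht0 ht
  exact gammaPDFReal_of_neg (lt_of_le_of_ne (not_lt.1 fun h => ht.2 ⟨ht.1, h⟩) ht0)

theorem gammaPDFReal_one_of_pos {x : ℝ} (hx : 0 < x) :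
    gammaPDFReal α 1 x = x ^ (α - 1) * exp (-x) / Gamma α := by
  rw [gammaPDFReal, if_pos hx.le]
  simp only [one_rpow, one_mul, one_div]
  ring

theorem integrableOn_log_mul_gammaPDFReal (hα : 0 < α) :
    IntegrableOn (fun x => log x * gammaPDFReal α 1 x) (Ioi 0) := by
  have hε : 0 < α / 2 := half_pos hα
  have hdom : IntegrableOn (fun x => (exp (-x) * x ^ (3 * α / 2 - 1) +
      exp (-x) * x ^ (α / 2 - 1)) / (α / 2) / Gamma α) (Ioi 0) :=
    (((GammaIntegral_convergent (by linarith)).add (GammaIntegral_convergent hε)).div_const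
      _).div_const _
  refine hdom.mono' ((measurable_log.mul (measurable_gammaPDFReal α 1)).aestronglyMeasurable)
    ((ae_restrict_iff' measurableSet_Ioi).2 (ae_of_all _ fun x (hx : 0 < x) => ?_))
  rw [norm_mul, norm_of_nonneg (gammaPDFReal_nonneg hα one_pos x), gammaPDFReal_one_of_pos hx,
    Real.norm_eq_abs]
  calc |log x| * (x ^ (α - 1) * exp (-x) / Gamma α)
      ≤ (x ^ (α / 2) + x ^ (-(α / 2))) / (α / 2) * (x ^ (α - 1) * exp (-x) / Gamma α) := by
        gcongr
        exact abs_log_le_rpow_add_rpow_neg hx hε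
    _ = _ := by
        rw [show 3 * α / 2 - 1 = α / 2 + (α - 1) by ring, show α / 2 - 1 = -(α / 2) + (α - 1) by ring,
          rpow_add hx, rpow_add hx]
        ring

theorem Real.hasDerivAt_Gamma_integral (hα : 0 < α) :
    HasDerivAt Gamma (∫ t in Ioi 0, t ^ (α - 1) * (log t * exp (-t))) α := by
  have hre : 0 < (α : ℂ).re := by simpa using hα
  have hC : HasDerivAt Complex.Gamma
      (∫ t in Ioi (0 : ℝ), (t : ℂ) ^ ((α : ℂ) - 1) * (log t * exp (-t))) α := by
    refine (Complex.hasDerivAt_GammaIntegral hre).congr_of_eventuallyEq ?_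
    filter_upwards [(Complex.continuous_re.isOpen_preimage _ isOpen_Ioi).mem_nhds hre] with s hs
    exact Complex.Gamma_eq_integral hs
  have hreal : ∫ t in Ioi (0 : ℝ), (t : ℂ) ^ ((α : ℂ) - 1) * (log t * exp (-t))
      = ((∫ t in Ioi 0, t ^ (α - 1) * (log t * exp (-t)) : ℝ) : ℂ) := by
    rw [← integral_complex_ofReal]
    refine setIntegral_congr_fun measurableSet_Ioi fun t (ht : 0 < t) => ?_
    rw [Complex.ofReal_mul, Complex.ofReal_cpow ht.le]
    push_cast
    rfl
  have h := (hreal ▸ hC).real_of_complex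
  rwa [Complex.ofReal_re] at h

theorem setIntegral_log_mul_gammaPDFReal (hα : 0 < α) :
    ∫ x in Ioi 0, log x * gammaPDFReal α 1 x = digamma α := by
  rw [digamma, (hasDerivAt_Gamma_integral hα).deriv, ← integral_div]
  refine setIntegral_congr_fun measurableSet_Ioi fun x (hx : 0 < x) => ?_
  rw [gammaPDFReal_one_of_pos hx]
  ring

end GammaDensity

/-- `logGap g μ = E[log X - log Y; X ≥ μY]` for independent `X, Y` with density `g` on `(0, ∞)`. -/
noncomputable def logGap (g : ℝ → ℝ) (μ : ℝ) : ℝ :=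
  ∫ p in {p : ℝ × ℝ | μ * p.2 ≤ p.1}, (log p.1 - log p.2) * (g p.1 * g p.2) ∂Measure.prod ρ ρ

section LogGap

variable {g : ℝ → ℝ}

theorem setIntegral_log_mul_cdf_add_eq (hg : Integrable g ρ)
    (hlog : Integrable (fun x => log x * g x) ρ) {μ : ℝ} (hμ : 0 < μ) :
    (∫ z in Ioi 0, log z * (∫ t in Iic (z / μ), g t ∂ρ) * g z) +
        ∫ z in Ioi 0, log z * (∫ t in Iic (μ * z), g t ∂ρ) * g z =
      (∫ x in Ioi 0, log x * g x) * (∫ x in Ioi 0, g x) + logGap g μ := by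
  set S : Set (ℝ × ℝ) := {p | μ * p.2 ≤ p.1}
  -- strict, so that `Tᶜ` is the mirror image of `S`; `Iic` and `Iio` integrals agree
  set T : Set (ℝ × ℝ) := {p | p.2 < μ * p.1}
  have hS : MeasurableSet S := measurableSet_le (by fun_prop) (by fun_prop)
  have hT : MeasurableSet T := measurableSet_lt (by fun_prop) (by fun_prop)
  have hF := hlog.mul_prod hg
  have hA : ∫ z in Ioi 0, log z * (∫ t in Iic (z / μ), g t ∂ρ) * g z =
      ∫ p in S, log p.1 * g p.1 * g p.2 ∂Measure.prod ρ ρ := by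
    rw [← integral_mul_setIntegral_eq_setIntegral_prod hlog hg hS]
    refine integral_congr_ae (ae_of_all _ fun z => ?_)
    have : Prod.mk z ⁻¹' S = Iic (z / μ) := by ext y; simp [S, le_div_iff₀ hμ, mul_comm]
    simp only [this]
    ring
  have hB : ∫ z in Ioi 0, log z * (∫ t in Iic (μ * z), g t ∂ρ) * g z =
      ∫ p in T, log p.1 * g p.1 * g p.2 ∂Measure.prod ρ ρ := by
    rw [← integral_mul_setIntegral_eq_setIntegral_prod hlog hg hT]
    refine integral_congr_ae (ae_of_all _ fun z => ?_)
    have : Prod.mk z ⁻¹' T = Iio (μ * z) := rfl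
    simp only [this, integral_Iic_eq_integral_Iio]
    ring
  have hTc : ∫ p in Tᶜ, log p.1 * g p.1 * g p.2 ∂Measure.prod ρ ρ =
      ∫ p in S, log p.2 * g p.2 * g p.1 ∂Measure.prod ρ ρ := by
    rw [← integral_indicator hT.compl, ← integral_indicator hS, ← integral_prod_swap]
    congr 1 with p
    simp [indicator_apply, S, T]
  have htotal : ∫ p, log p.1 * g p.1 * g p.2 ∂Measure.prod ρ ρ =
      (∫ x in Ioi 0, log x * g x) * ∫ x in Ioi 0, g x :=
    integral_prod_mul (fun x => log x * g x) g
  have hgap : logGap g μ = ∫ p in S, log p.1 * g p.1 * g p.2 ∂Measure.prod ρ ρ -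
      ∫ p in S, log p.2 * g p.2 * g p.1 ∂Measure.prod ρ ρ := by
    have hF' : Integrable (fun p : ℝ × ℝ => log p.2 * g p.2 * g p.1) (Measure.prod ρ ρ) := hF.swap
    rw [logGap, ← integral_sub hF.integrableOn hF'.integrableOn]
    refine integral_congr_ae (ae_of_all _ fun p => ?_)
    ring
  have hsplit := integral_add_compl hT hF
  rw [hA, hB, hgap, ← htotal, ← hsplit, hTc]
  ring

theorem logGap_eq_setIntegral (g : ℝ → ℝ) (μ : ℝ) :
    logGap g μ = ∫ p in {p : ℝ × ℝ | μ * p.2 ≤ p.1} ∩ Ioi 0 ×ˢ Ioi 0,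
      (log p.1 - log p.2) * (g p.1 * g p.2) := by
  rw [logGap, Measure.prod_restrict, ← Measure.volume_eq_prod,
    Measure.restrict_restrict (measurableSet_le (by fun_prop) (by fun_prop))]

theorem antitone_setOf_mul_snd_le_fst_inter_Ioi_prod :
    Antitone fun μ : ℝ => {p : ℝ × ℝ | μ * p.2 ≤ p.1} ∩ Ioi 0 ×ˢ Ioi 0 := by
  rintro μ μ' hμμ' p ⟨hp, hp1, hp2⟩
  exact ⟨le_trans (mul_le_mul_of_nonneg_right hμμ' (le_of_lt hp2)) hp, hp1, hp2⟩

theorem integrableOn_logGap_integrand (hg : Integrable g ρ)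
    (hlog : Integrable (fun x => log x * g x) ρ) :
    IntegrableOn (fun p : ℝ × ℝ => (log p.1 - log p.2) * (g p.1 * g p.2)) (Ioi 0 ×ˢ Ioi 0) := by
  rw [IntegrableOn, Measure.volume_eq_prod, ← Measure.prod_restrict]
  refine ((hlog.mul_prod hg).sub (hg.mul_prod hlog)).congr (ae_of_all _ fun p => ?_)
  simp only [Pi.sub_apply]
  ring

theorem logGap_antitoneOn (hg : Integrable g ρ) (hlog : Integrable (fun x => log x * g x) ρ)
    (hg_nonneg : ∀ x, 0 ≤ g x) : AntitoneOn (logGap g) (Ici 1) := by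
  intro μ (hμ : 1 ≤ μ) μ' _ hμμ'
  rw [logGap_eq_setIntegral, logGap_eq_setIntegral]
  refine setIntegral_mono_set ((integrableOn_logGap_integrand hg hlog).mono_set inter_subset_right)
    ?_ (antitone_setOf_mul_snd_le_fst_inter_Ioi_prod hμμ').eventuallyLE
  refine (ae_restrict_iff' ((measurableSet_le (by fun_prop) (by fun_prop)).inter
    (measurableSet_Ioi.prod measurableSet_Ioi))).2 (ae_of_all _ ?_)
  rintro p ⟨hp, -, hp2⟩
  have hle : p.2 ≤ p.1 := le_trans (le_mul_of_one_le_left (le_of_lt hp2) hμ) hp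
  exact mul_nonneg (sub_nonneg.2 (log_le_log hp2 hle)) (mul_nonneg (hg_nonneg _) (hg_nonneg _))

theorem tendsto_logGap_atTop (hg : Integrable g ρ) (hlog : Integrable (fun x => log x * g x) ρ) :
    Tendsto (logGap g) atTop (𝓝 0) := by
  have hempty : ⋂ μ : ℝ, {p : ℝ × ℝ | μ * p.2 ≤ p.1} ∩ Ioi 0 ×ˢ Ioi 0 = ∅ := by
    refine eq_empty_of_forall_notMem fun p hp => ?_
    obtain ⟨hp : (p.1 / p.2 + 1) * p.2 ≤ p.1, -, hp2 : 0 < p.2⟩ := mem_iInter.1 hp (p.1 / p.2 + 1)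
    rw [add_mul, div_mul_cancel₀ _ hp2.ne'] at hp
    linarith
  have h := tendsto_setIntegral_of_antitone
    (fun μ => (measurableSet_le (by fun_prop) (by fun_prop)).inter
      (measurableSet_Ioi.prod measurableSet_Ioi)) antitone_setOf_mul_snd_le_fst_inter_Ioi_prod
    ⟨0, (integrableOn_logGap_integrand hg hlog).mono_set inter_subset_right⟩
  rw [hempty, Measure.restrict_empty, integral_zero_measure] at h
  exact h.congr fun μ => (logGap_eq_setIntegral g μ).symm

end LogGap

section Cstar

variable {α : ℝ}

theorem cstarW_eq_digamma_add_logGap (hα : 0 < α) {μ : ℝ} (hμ : 0 < μ) :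
    cstarW α μ = digamma α + logGap (gammaPDFReal α 1) μ := by
  simp_rw [cstarW, gammaCDF_eq_setIntegral_Ioi]
  rw [setIntegral_log_mul_cdf_add_eq (integrable_gammaPDFReal hα one_pos).restrict
    (integrableOn_log_mul_gammaPDFReal hα) hμ, setIntegral_log_mul_gammaPDFReal hα,
    setIntegral_Ioi_gammaPDFReal hα one_pos, mul_one]

theorem cstarW_antitoneOn (hα : 0 < α) : AntitoneOn (cstarW α) (Ici 1) := by
  intro μ (hμ : 1 ≤ μ) μ' (hμ' : 1 ≤ μ') hle
  rw [cstarW_eq_digamma_add_logGap hα (by linarith), cstarW_eq_digamma_add_logGap hα (by linarith)]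
  exact add_le_add_right (logGap_antitoneOn (integrable_gammaPDFReal hα one_pos).restrict
    (integrableOn_log_mul_gammaPDFReal hα) (gammaPDFReal_nonneg hα one_pos) hμ hμ' hle) _

theorem tendsto_cstarW_atTop (hα : 0 < α) : Tendsto (cstarW α) atTop (𝓝 (digamma α)) := by
  have h := (tendsto_logGap_atTop (integrable_gammaPDFReal hα one_pos).restrict
    (integrableOn_log_mul_gammaPDFReal hα)).const_add (digamma α)
  rw [add_zero] at h
  refine h.congr' ?_
  filter_upwards [eventually_gt_atTop 0] with μ hμ
  exact (cstarW_eq_digamma_add_logGap hα hμ).symm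

end Cstar

/-- inf_{μ≥1} c*(μ) = ψ(α) and sup_{μ≥1} c*(μ) = 2∫₀^∞ ln(z) G_α(z) g_α(z) dz,
    the sup being attained at μ = 1. -/
theorem cstarW_inf_sup (α : ℝ) (hα : 0 < α) :
    sInf (cstarW α '' Set.Ici 1) = digamma α ∧
      sSup (cstarW α '' Set.Ici 1) =
        2 * ∫ z in Set.Ioi (0:ℝ), Real.log z * gammaCDF α z * gammaPDFReal α 1 z ∧
      cstarW α 1 = 2 * ∫ z in Set.Ioi (0:ℝ), Real.log z * gammaCDF α z * gammaPDFReal α 1 z := by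
  have hone : cstarW α 1 =
      2 * ∫ z in Set.Ioi (0:ℝ), Real.log z * gammaCDF α z * gammaPDFReal α 1 z := by
    simp only [cstarW, div_one, one_mul]
    ring
  have hanti := cstarW_antitoneOn hα
  refine ⟨hanti.csInf_image_Ici_eq_of_tendsto (tendsto_cstarW_atTop hα), ?_, hone⟩
  rw [(hanti.map_isLeast isLeast_Ici).csSup_eq, hone]
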